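/- arXiv:1412.7157 — 2 statements merged into one kernel-verified Lean document; each statement's English description precedes it below -/
import Mathlib

section
/- The infinite series ∑_{n=0}^∞ 1/(1 + n(n+1)/2) converges and equals (2π/√7)·tanh(√7·π/2). -/
/-!
Since `1 + n(n+1)/2 = ((n + 1/2)² + 7/4) / 2`, the series is `2 ∑ f n` with
`f n = 1 / ((n + 1/2)² + b²)` and `b = √7/2`. Take imaginary parts in the Mittag-Leffler expansion
`π cot (π z) - 1/z = ∑ₙ (1/(z - (n+1)) + 1/(z + (n+1)))` at `z = 1/2 + b i`: there
`π cot (π z) = -π i tanh (π b)`, `Im (1/z) = -b f 0`, and the `n`-th term has imaginary part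
`-b (f n + f (n+1))`, so that every `f n` is counted twice except `f 0`.
-/

open Real

namespace Complex

lemma hasSum_cotTerm {x : ℂ} (hx : x ∈ integerComplement) :
    HasSum (fun n : ℕ => 1 / (x - (n + 1)) + 1 / (x + (n + 1))) (π * cot (π * x) - 1 / x) := by
  rw [cot_series_rep' hx]
  exact (summable_cotTerm hx).hasSum

lemma cot_add_pi_div_two (z : ℂ) : cot (z + π / 2) = -tan z := by
  rw [cot_eq_cos_div_sin, tan_eq_sin_div_cos, cos_add_pi_div_two, sin_add_pi_div_two, neg_div]

lemma half_add_mul_I_mem_integerComplement {b : ℝ} (hb : b ≠ 0) :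
    (1 / 2 + b * I : ℂ) ∈ integerComplement := by
  rintro ⟨n, hn⟩
  exact hb (by simpa using (congrArg im hn).symm)

lemma im_one_div_ofReal_add_mul_I (a b : ℝ) : (1 / (a + b * I)).im = -b / (a ^ 2 + b ^ 2) := by
  simp [normSq_apply, sq]

end Complex

lemma hasSum_of_hasSum_add_succ {f : ℕ → ℝ} {a : ℝ} (hf : 0 ≤ f)
    (h : HasSum (fun n => f n + f (n + 1)) a) : HasSum f ((a + f 0) / 2) := by
  have hfs : Summable f := h.summable.of_nonneg_of_le hf fun n => le_add_of_nonneg_right (hf _)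
  have hsucc : HasSum (fun n => f (n + 1)) (∑' n, f n - f 0) := by
    simpa using (hasSum_nat_add_iff' 1).mpr hfs.hasSum
  have hsum := h.unique (hfs.hasSum.add hsucc)
  convert hfs.hasSum using 1
  linarith

open Complex in
theorem hasSum_one_div_add_half_sq_add_sq {b : ℝ} (hb : b ≠ 0) :
    HasSum (fun n : ℕ => 1 / ((n + 1 / 2) ^ 2 + b ^ 2)) (π * Real.tanh (π * b) / (2 * b)) := by
  set f : ℕ → ℝ := fun n => 1 / ((n + 1 / 2) ^ 2 + b ^ 2)
  have hcot : π * cot (π * (1 / 2 + b * I)) = -(π * Real.tanh (π * b) : ℝ) * I := by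
    rw [show π * (1 / 2 + b * I) = (π * b : ℝ) * I + π / 2 by push_cast; ring,
      cot_add_pi_div_two, tan_mul_I, ← ofReal_tanh]
    push_cast
    ring
  have him := hasSum_im (hasSum_cotTerm (half_add_mul_I_mem_integerComplement hb))
  have hterm (n : ℕ) : (1 / (1 / 2 + b * I - (n + 1)) + 1 / (1 / 2 + b * I + (n + 1))).im
      = -b * (f n + f (n + 1)) := by
    rw [add_im, show 1 / 2 + b * I - (n + 1) = (-(n + 1 / 2) : ℝ) + b * I by push_cast; ring,
      show 1 / 2 + b * I + (n + 1) = ((n + 1 + 1 / 2) : ℝ) + b * I by push_cast; ring,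
      im_one_div_ofReal_add_mul_I, im_one_div_ofReal_add_mul_I]
    simp only [f]
    push_cast
    ring
  have hval : (π * cot (π * (1 / 2 + b * I)) - 1 / (1 / 2 + b * I)).im
      = -b * (π * Real.tanh (π * b) / b - f 0) := by
    rw [hcot, sub_im, show (1 / 2 + b * I : ℂ) = ((1 / 2 : ℝ) : ℂ) + b * I by push_cast; ring,
      im_one_div_ofReal_add_mul_I]
    simp only [mul_im, neg_re, neg_im, ofReal_re, ofReal_im, I_re, I_im, f]
    field_simp
    ring
  simp only [hterm, hval] at him
  have hpair : HasSum (fun n => f n + f (n + 1)) (π * Real.tanh (π * b) / b - f 0) := by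
    simpa [hb] using him.mul_left (-b⁻¹)
  convert hasSum_of_hasSum_add_succ (fun n => by positivity) hpair using 1
  field_simp
  ring

theorem levine_series :
    Summable (fun n : ℕ => (1 : ℝ) / (1 + n * (n + 1) / 2)) ∧
    ∑' n : ℕ, (1 : ℝ) / (1 + n * (n + 1) / 2)
      = (2 * π / Real.sqrt 7) * Real.tanh (Real.sqrt 7 * π / 2) := by
  have hb : Real.sqrt 7 / 2 ≠ 0 := by positivity
  have hsq : Real.sqrt 7 ^ 2 = 7 := Real.sq_sqrt (by norm_num)
  have hterm (n : ℕ) : (1 : ℝ) / (1 + n * (n + 1) / 2)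
      = 2 * (1 / ((n + 1 / 2) ^ 2 + (Real.sqrt 7 / 2) ^ 2)) := by
    rw [div_pow, hsq]
    field_simp
    ring
  have hval : 2 * (π * Real.tanh (π * (Real.sqrt 7 / 2)) / (2 * (Real.sqrt 7 / 2)))
      = (2 * π / Real.sqrt 7) * Real.tanh (Real.sqrt 7 * π / 2) := by
    rw [mul_comm π (Real.sqrt 7 / 2), ← mul_div_right_comm]
    field_simp
  have h := ((hasSum_one_div_add_half_sq_add_sq hb).mul_left 2).congr_fun hterm
  rw [hval] at h
  exact ⟨h.summable, h.tsum_eq⟩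
end

section
/- The series ∑_{n=0}^∞ 1/(1 + n(n+1)/2) is strictly less than 2.37366. -/
open Filter Finset

private lemma aux_summable : Summable (fun n : ℕ => (1 : ℝ) / (1 + n * (n + 1) / 2)) := by
  rw [← summable_nat_add_iff 1]
  have h1 : Summable (fun n : ℕ => (1 : ℝ) / (n : ℝ) ^ 2) :=
    (Real.summable_one_div_nat_pow (p := 2)).mpr one_lt_two
  have h2 : Summable (fun n : ℕ => (2 : ℝ) / ((n : ℝ) + 1) ^ 2) := by
    have := ((summable_nat_add_iff 1).mpr h1).mul_left 2
    simpa [div_eq_mul_inv] using this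
  refine Summable.of_nonneg_of_le (fun n => ?_) (fun n => ?_) h2
  · positivity
  · push_cast
    rw [div_le_div_iff₀ (by positivity) (by positivity)]
    nlinarith [Nat.cast_nonneg (α := ℝ) n]

private lemma aux_tail : HasSum (fun n : ℕ => (2 : ℝ) / ((n : ℝ) + 100) - 2 / ((n : ℝ) + 101)) (1 / 50) := by
  have hnn : ∀ n : ℕ, 0 ≤ (2 : ℝ) / ((n : ℝ) + 100) - 2 / ((n : ℝ) + 101) := by
    intro n
    have h1 : (0 : ℝ) < (n : ℝ) + 100 := by positivity
    have : (2 : ℝ) / ((n : ℝ) + 101) ≤ 2 / ((n : ℝ) + 100) := by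
      apply div_le_div_of_nonneg_left (by norm_num) h1 (by linarith)
    linarith
  rw [hasSum_iff_tendsto_nat_of_nonneg hnn]
  have hsum : ∀ N : ℕ, ∑ i ∈ Finset.range N,
      ((2 : ℝ) / ((i : ℝ) + 100) - 2 / ((i : ℝ) + 101)) = 1 / 50 - 2 / ((N : ℝ) + 100) := by
    intro N
    induction N with
    | zero => norm_num
    | succ n ih =>
      rw [Finset.sum_range_succ, ih]
      have h1 : ((n : ℝ) + 100) ≠ 0 := by positivity
      have h2 : ((n : ℝ) + 101) ≠ 0 := by positivity
      push_cast
      field_simp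
      ring
  simp_rw [hsum]
  have h0 : Tendsto (fun N : ℕ => (2 : ℝ) / ((N : ℝ) + 100)) atTop (nhds 0) := by
    apply Tendsto.div_atTop tendsto_const_nhds
    exact tendsto_atTop_add_const_right _ _ tendsto_natCast_atTop_atTop
  have := (tendsto_const_nhds (x := (1:ℝ)/50) (f := atTop (α := ℕ))).sub h0
  simpa using this

set_option maxHeartbeats 2000000 in
theorem levine_series_lt :
    ∑' n : ℕ, (1 : ℝ) / (1 + n * (n + 1) / 2) < 2.37366 := by
  have hf := aux_summable
  rw [← Summable.sum_add_tsum_nat_add 100 hf]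
  have hle : ∀ n : ℕ, (1 : ℝ) / (1 + (n + 100 : ℕ) * ((n + 100 : ℕ) + 1) / 2) ≤
      (2 : ℝ) / ((n : ℝ) + 100) - 2 / ((n : ℝ) + 101) := by
    intro n
    have h1 : (0 : ℝ) < (n : ℝ) + 100 := by positivity
    have h2 : (0 : ℝ) < (n : ℝ) + 101 := by positivity
    have hd : (2 : ℝ) / ((n : ℝ) + 100) - 2 / ((n : ℝ) + 101) =
        2 / (((n : ℝ) + 100) * ((n : ℝ) + 101)) := by
      field_simp
      ring
    rw [hd]
    push_cast
    rw [div_le_div_iff₀ (by positivity) (by positivity)]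
    nlinarith [Nat.cast_nonneg (α := ℝ) n]
  have htail : ∑' n : ℕ, (1 : ℝ) / (1 + (n + 100 : ℕ) * ((n + 100 : ℕ) + 1) / 2) ≤ 1 / 50 := by
    rw [← aux_tail.tsum_eq]
    exact Summable.tsum_le_tsum hle ((summable_nat_add_iff 100).mpr hf) aux_tail.summable
  have hsum : ∑ i ∈ Finset.range 100, (1 : ℝ) / (1 + i * (i + 1) / 2) < 2.37366 - 1 / 50 := by
    norm_num [Finset.sum_range_succ]
  linarith
end
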